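/- Let a ∈ ℝ, b > 0, c = a/b and c₀ < 0, and let ρ(x,t) = ρ¹(x,t) + ρ²(x,t) + ρ³(x,t) be the explicit solution defined below. For each x₀ ≥ 0 let ρ^F(·,·|x₀) be the Smoluchowski fundamental solution on the half-line with parameters a, b, x₀. Then for all x ≥ 0 and t > 0, ∫₀^∞ ρ^F(x,t|x₀) · (−c₀ e^{c₀ x₀}) dx₀ = ρ(x,t); that is, convolving the fundamental solution with the exponential initial density ρ₀(x₀) = −c₀ e^{c₀ x₀} yields the explicit formula ρ. -/

import Mathlib

open MeasureTheory Set Filter Topology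

/-- The standard normal cumulative distribution function `Φ`. -/
noncomputable def stdNormalCdf (z : ℝ) : ℝ :=
  ∫ x in Iic z, (Real.sqrt (2 * Real.pi))⁻¹ * Real.exp (-x ^ 2 / 2)

/-- First part `ρ¹` of the explicit solution (with `c = a/b`, `σ = √(2bt)`). -/
noncomputable def explRho1 (a b c₀ : ℝ) (x t : ℝ) : ℝ :=
  -c₀ * Real.exp (c₀ * (c₀ * b * t + x - a * t)) *
    stdNormalCdf ((2 * c₀ * b * t + x - a * t) / Real.sqrt (2 * b * t))

/-- Second part `ρ²` of the explicit solution (with `d = c₀ − a/b`). -/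
noncomputable def explRho2 (a b c₀ : ℝ) (x t : ℝ) : ℝ :=
  -c₀ * Real.exp ((c₀ - a / b) * ((c₀ - a / b) * b * t - x + a * t)) *
    stdNormalCdf ((2 * (c₀ - a / b) * b * t - x + a * t) / Real.sqrt (2 * b * t))

/-- Third part `ρ³` of the explicit solution (with `c = a/b`). -/
noncomputable def explRho3 (a b c₀ : ℝ) (x t : ℝ) : ℝ :=
  -(a / b) * Real.exp ((a / b) * x) *
      stdNormalCdf (-(x + a * t) / Real.sqrt (2 * b * t))
  + (a / b) * Real.exp ((a / b) * x) * Real.exp (c₀ * (c₀ * b * t - x - a * t)) *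
      stdNormalCdf ((2 * c₀ * b * t - x - a * t) / Real.sqrt (2 * b * t))

/-- The explicit solution `ρ = ρ¹ + ρ² + ρ³` of the Smoluchowski equation on the
half-line with exponential initial datum `ρ₀(x) = −c₀ e^{c₀ x}`. -/
noncomputable def explRho (a b c₀ : ℝ) (x t : ℝ) : ℝ :=
  explRho1 a b c₀ x t + explRho2 a b c₀ x t + explRho3 a b c₀ x t

/-- The Smoluchowski fundamental solution on the half-line with drift `a`,
diffusion `b` and initial point `x₀`. -/
noncomputable def smolFund (a b x₀ : ℝ) (x t : ℝ) : ℝ :=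
  (Real.sqrt (4 * Real.pi * b * t))⁻¹ * Real.exp (-(x - x₀ - a * t) ^ 2 / (4 * b * t))
  + (Real.sqrt (4 * Real.pi * b * t))⁻¹ *
      Real.exp (-(a / b) * x₀ - (x + x₀ - a * t) ^ 2 / (4 * b * t))
  - a / (2 * b) * Real.exp ((a / b) * x) *
      ((2 / Real.sqrt Real.pi) *
        ∫ y in Ioi ((x + x₀ + a * t) / Real.sqrt (4 * b * t)), Real.exp (-y ^ 2))

/-!
Multiplying out, the convolution splits into two Gaussian integrals against an exponential and
one integral of `e^{c₀ x₀}` against a Gaussian tail. Completing the square evaluates the first two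
as `e^{…} Φ(…)`, which are `ρ¹` and `ρ²`. Integrating the third by parts, the tail differentiates
to a Gaussian, so it becomes a boundary term at `x₀ = 0` plus one more integral of the first kind;
together they give `ρ³`.
-/

open Real

lemma integral_comp_add_right_Ioi {E : Type*} [NormedAddCommGroup E] [NormedSpace ℝ E]
    (f : ℝ → E) (a d : ℝ) :
    ∫ x in Ioi a, f (x + d) = ∫ x in Ioi (a + d), f x := by
  have hemb : MeasurableEmbedding fun x : ℝ => x + d :=
    (Homeomorph.addRight d).isClosedEmbedding.measurableEmbedding
  have h := hemb.setIntegral_map (μ := volume) f (Ioi (a + d))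
  rwa [map_add_right_eq_self, preimage_add_const_Ioi, add_sub_cancel_right, eq_comm] at h

lemma integrable_exp_neg_sq_div_two : Integrable fun x : ℝ => exp (-x ^ 2 / 2) := by
  simpa [div_eq_inv_mul] using integrable_exp_neg_mul_sq (b := (2 : ℝ)⁻¹) (by norm_num)

lemma stdNormalCdf_eq_inv_mul_integral (z : ℝ) :
    stdNormalCdf z = (√(2 * π))⁻¹ * ∫ x in Iic z, exp (-x ^ 2 / 2) :=
  integral_const_mul _ _

lemma stdNormalCdf_nonneg (z : ℝ) : 0 ≤ stdNormalCdf z :=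
  setIntegral_nonneg measurableSet_Iic fun _ _ => by positivity

lemma stdNormalCdf_le_one (z : ℝ) : stdNormalCdf z ≤ 1 := by
  have htotal : ∫ x, exp (-x ^ 2 / 2) = √(2 * π) := by
    simpa [div_eq_inv_mul, div_inv_eq_mul, mul_comm] using integral_gaussian (2 : ℝ)⁻¹
  rw [stdNormalCdf_eq_inv_mul_integral, inv_mul_le_iff₀ (by positivity), mul_one, ← htotal]
  exact setIntegral_le_integral integrable_exp_neg_sq_div_two
    (Eventually.of_forall fun _ => by positivity)

lemma hasDerivAt_stdNormalCdf (z : ℝ) :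
    HasDerivAt stdNormalCdf ((√(2 * π))⁻¹ * exp (-z ^ 2 / 2)) z := by
  set φ : ℝ → ℝ := fun x => (√(2 * π))⁻¹ * exp (-x ^ 2 / 2)
  have hφ : IntegrableOn φ univ := (integrable_exp_neg_sq_div_two.const_mul _).integrableOn
  have hsplit : stdNormalCdf = fun u => stdNormalCdf 0 + ∫ x in (0 : ℝ)..u, φ x := by
    ext u
    rw [← intervalIntegral.integral_Iic_sub_Iic (hφ.mono_set (subset_univ _))
      (hφ.mono_set (subset_univ _))]
    simp only [stdNormalCdf, φ, add_sub_cancel]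
  rw [hsplit]
  exact ((continuous_const.mul (by fun_prop)).integral_hasStrictDerivAt 0 z).hasDerivAt.const_add _

lemma integral_Ioi_exp_neg_sq_div (w μ : ℝ) {s : ℝ} (hs : 0 < s) :
    ∫ x in Ioi w, exp (-(x - μ) ^ 2 / (2 * s ^ 2))
      = s * √(2 * π) * stdNormalCdf ((μ - w) / s) := by
  set g : ℝ → ℝ := fun u => exp (-u ^ 2 / 2)
  have hshift := integral_comp_add_right_Ioi (fun x => exp (-(x - μ) ^ 2 / (2 * s ^ 2))) (w - μ) μ
  rw [sub_add_cancel] at hshift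
  calc ∫ x in Ioi w, exp (-(x - μ) ^ 2 / (2 * s ^ 2))
      = ∫ x in Ioi (w - μ), g (s⁻¹ * x) := by
        rw [← hshift]
        refine setIntegral_congr_fun measurableSet_Ioi fun x _ => ?_
        simp only [g, add_sub_cancel_right]
        field_simp
    _ = s * ∫ u in Iic ((μ - w) / s), g u := by
        rw [integral_comp_mul_left_Ioi g _ (inv_pos.2 hs), inv_inv, smul_eq_mul,
          show s⁻¹ * (w - μ) = -((μ - w) / s) by ring, ← integral_comp_neg_Iic]
        simp only [g, neg_sq]
    _ = s * √(2 * π) * stdNormalCdf ((μ - w) / s) := by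
        rw [stdNormalCdf_eq_inv_mul_integral, mul_assoc, mul_inv_cancel_left₀ (by positivity)]

lemma exp_mul_sub_sq_eq (k m x : ℝ) {σ : ℝ} (hσ : σ ≠ 0) :
    exp (k * x - (x + m) ^ 2 / (2 * σ ^ 2))
      = exp (k ^ 2 * σ ^ 2 / 2 - k * m) * exp (-(x - (k * σ ^ 2 - m)) ^ 2 / (2 * σ ^ 2)) := by
  rw [← exp_add]
  congr 1
  field_simp
  ring

lemma integrable_exp_mul_sub_sq (k m : ℝ) {σ : ℝ} (hσ : σ ≠ 0) :
    Integrable fun x => exp (k * x - (x + m) ^ 2 / (2 * σ ^ 2)) := by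
  have h := ((integrable_exp_neg_mul_sq (b := (2 * σ ^ 2)⁻¹) (by positivity)).comp_sub_right
    (k * σ ^ 2 - m)).const_mul (exp (k ^ 2 * σ ^ 2 / 2 - k * m))
  refine h.congr (Eventually.of_forall fun x => ?_)
  simp only [exp_mul_sub_sq_eq k m x hσ, neg_mul, ← div_eq_inv_mul, neg_div]

lemma integral_Ioi_exp_mul_sub_sq_div (k m : ℝ) {σ : ℝ} (hσ : 0 < σ) :
    ∫ x in Ioi 0, exp (k * x - (x + m) ^ 2 / (2 * σ ^ 2)) / (σ * √(2 * π))
      = exp (k ^ 2 * σ ^ 2 / 2 - k * m) * stdNormalCdf ((k * σ ^ 2 - m) / σ) := by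
  simp only [div_eq_inv_mul _ (σ * √(2 * π)), exp_mul_sub_sq_eq k m _ hσ.ne', integral_const_mul,
    integral_Ioi_exp_neg_sq_div 0 _ hσ, sub_zero]
  field_simp

lemma integrableOn_exp_mul_stdNormalCdf {c : ℝ} (hc : c < 0) (f : ℝ → ℝ) (hf : Continuous f) :
    IntegrableOn (fun x => exp (c * x) * stdNormalCdf (f x)) (Ioi 0) := by
  have hexp : IntegrableOn (fun x => exp (c * x)) (Ioi 0) := by
    simpa using exp_neg_integrableOn_Ioi 0 (neg_pos.2 hc)
  have hcont : Continuous fun x => exp (c * x) * stdNormalCdf (f x) :=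
    (by fun_prop : Continuous fun x => exp (c * x)).mul
      ((continuous_iff_continuousAt.2 fun z => (hasDerivAt_stdNormalCdf z).continuousAt).comp hf)
  refine hexp.mono' hcont.aestronglyMeasurable.restrict (Eventually.of_forall fun x => ?_)
  rw [norm_mul, Real.norm_of_nonneg (exp_pos _).le, Real.norm_of_nonneg (stdNormalCdf_nonneg _)]
  exact mul_le_of_le_one_right (exp_pos _).le (stdNormalCdf_le_one _)

lemma integral_Ioi_exp_mul_stdNormalCdf {c σ : ℝ} (hc : c < 0) (hσ : 0 < σ) (m : ℝ) :
    ∫ x in Ioi 0, exp (c * x) * stdNormalCdf (-(x + m) / σ)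
      = (exp (c ^ 2 * σ ^ 2 / 2 - c * m) * stdNormalCdf ((c * σ ^ 2 - m) / σ)
          - stdNormalCdf (-m / σ)) / c := by
  have hc' : c ≠ 0 := hc.ne
  set H : ℝ → ℝ := fun x => exp (c * x) / c * stdNormalCdf (-(x + m) / σ)
  set G : ℝ → ℝ := fun x => exp (c * x - (x + m) ^ 2 / (2 * σ ^ 2)) / (σ * √(2 * π)) / c
  have hderiv : ∀ x, HasDerivAt H (exp (c * x) * stdNormalCdf (-(x + m) / σ) - G x) x := by
    intro x
    have hin : HasDerivAt (fun y => -(y + m) / σ) (-1 / σ) x := by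
      simpa using (((hasDerivAt_id x).add_const m).neg).div_const σ
    refine ((((hasDerivAt_id x).const_mul c).exp.div_const c).mul
      ((hasDerivAt_stdNormalCdf _).comp x hin)).congr_deriv ?_
    have hsq : c * x - (x + m) ^ 2 / (2 * σ ^ 2) = c * x + -(-(x + m) / σ) ^ 2 / 2 := by
      field_simp
      ring
    simp only [G, id, Function.comp_apply, hsq, exp_add]
    field_simp
    ring
  have hlim : Tendsto H atTop (𝓝 0) := by
    have hdecay : Tendsto (fun x => exp (c * x) / c) atTop (𝓝 0) := by
      simpa using (tendsto_exp_atBot.comp (tendsto_id.const_mul_atTop_of_neg hc)).div_const c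
    refine hdecay.zero_mul_isBoundedUnder_le ⟨1, eventually_map.2 (Eventually.of_forall fun x => ?_)⟩
    exact (Real.norm_of_nonneg (stdNormalCdf_nonneg _)).trans_le (stdNormalCdf_le_one _)
  have hG : IntegrableOn G (Ioi 0) :=
    (((integrable_exp_mul_sub_sq c m hσ.ne').div_const _).div_const _).integrableOn
  have hftc := integral_Ioi_of_hasDerivAt_of_tendsto' (fun x _ => hderiv x)
    ((integrableOn_exp_mul_stdNormalCdf hc _ (by fun_prop)).sub hG) hlim
  rw [integral_sub (integrableOn_exp_mul_stdNormalCdf hc _ (by fun_prop)) hG] at hftc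
  simp only [G, H, integral_div, integral_Ioi_exp_mul_sub_sq_div c m hσ, mul_zero, exp_zero,
    zero_add] at hftc
  field_simp at hftc ⊢
  linear_combination hftc

lemma integral_Ioi_exp_neg_sq (w : ℝ) :
    ∫ y in Ioi w, exp (-y ^ 2) = √π * stdNormalCdf (-(√2 * w)) := by
  have h2 : (0 : ℝ) < √2 := by positivity
  have h := integral_Ioi_exp_neg_sq_div w 0 (inv_pos.2 h2)
  simp only [sub_zero, inv_pow, sq_sqrt zero_le_two, show (2 : ℝ) * 2⁻¹ = 1 by norm_num, div_one,
    zero_sub, div_inv_eq_mul] at h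
  rw [h, sqrt_mul zero_le_two, ← mul_assoc, inv_mul_cancel₀ h2.ne', one_mul, neg_mul, mul_comm w]

lemma smolFund_mul_exp (a b c₀ x₀ x t : ℝ) {σ : ℝ} (hσ : 0 < σ) (hσ2 : σ ^ 2 = 2 * b * t) :
    smolFund a b x₀ x t * exp (c₀ * x₀)
      = exp (c₀ * x₀ - (x₀ + (a * t - x)) ^ 2 / (2 * σ ^ 2)) / (σ * √(2 * π))
        + exp ((c₀ - a / b) * x₀ - (x₀ + (x - a * t)) ^ 2 / (2 * σ ^ 2)) / (σ * √(2 * π))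
        - a / b * exp (a / b * x) * (exp (c₀ * x₀) * stdNormalCdf (-(x₀ + (x + a * t)) / σ)) := by
  have h4bt : 4 * b * t = 2 * σ ^ 2 := by rw [hσ2]; ring
  have hnorm : √(4 * π * b * t) = σ * √(2 * π) := by
    rw [show 4 * π * b * t = σ ^ 2 * (2 * π) by rw [hσ2]; ring, sqrt_mul (sq_nonneg σ),
      sqrt_sq hσ.le]
  have hscale : √(4 * b * t) = √2 * σ := by
    rw [h4bt, sqrt_mul zero_le_two, sqrt_sq hσ.le]
  have harg : -(√2 * ((x + x₀ + a * t) / (√2 * σ))) = -(x₀ + (x + a * t)) / σ := by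
    field_simp
    ring
  rw [smolFund, hnorm, hscale, integral_Ioi_exp_neg_sq, harg, h4bt]
  have e1 : c₀ * x₀ - (x₀ + (a * t - x)) ^ 2 / (2 * σ ^ 2)
      = -(x - x₀ - a * t) ^ 2 / (2 * σ ^ 2) + c₀ * x₀ := by ring
  have e2 : (c₀ - a / b) * x₀ - (x₀ + (x - a * t)) ^ 2 / (2 * σ ^ 2)
      = -(a / b) * x₀ - (x + x₀ - a * t) ^ 2 / (2 * σ ^ 2) + c₀ * x₀ := by ring
  have hπ : √π ≠ 0 := by positivity
  rw [e1, e2, exp_add, exp_add]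
  field_simp

/-- Convolving the Smoluchowski fundamental solution with the exponential
initial density `ρ₀(x₀) = −c₀ e^{c₀ x₀}` yields the explicit solution formula. -/
theorem stmt_9 (a b c₀ : ℝ) (hb : 0 < b) (hc₀ : c₀ < 0) :
    ∀ x ≥ (0:ℝ), ∀ t > (0:ℝ),
      (∫ x₀ in Ioi (0:ℝ), smolFund a b x₀ x t * (-c₀ * Real.exp (c₀ * x₀)))
        = explRho a b c₀ x t := by
  intro x _ t ht
  set σ := √(2 * b * t) with hσ_def
  have hσ : 0 < σ := by positivity
  have hσ2 : σ ^ 2 = 2 * b * t := sq_sqrt (by positivity)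
  have hintegrand : ∀ x₀, smolFund a b x₀ x t * (-c₀ * exp (c₀ * x₀))
      = -c₀ * (smolFund a b x₀ x t * exp (c₀ * x₀)) := fun _ => by ring
  simp only [hintegrand, integral_const_mul, smolFund_mul_exp a b c₀ _ x t hσ hσ2]
  have hgauss : ∀ k m, IntegrableOn
      (fun x₀ => exp (k * x₀ - (x₀ + m) ^ 2 / (2 * σ ^ 2)) / (σ * √(2 * π))) (Ioi 0) :=
    fun k m => ((integrable_exp_mul_sub_sq k m hσ.ne').div_const _).integrableOn
  have htail := (integrableOn_exp_mul_stdNormalCdf hc₀ (fun x₀ => -(x₀ + (x + a * t)) / σ)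
    (by fun_prop)).const_mul (a / b * exp (a / b * x))
  rw [integral_sub ((hgauss _ _).fun_add (hgauss _ _)) htail, integral_add (hgauss _ _) (hgauss _ _),
    integral_const_mul, integral_Ioi_exp_mul_sub_sq_div _ _ hσ,
    integral_Ioi_exp_mul_sub_sq_div _ _ hσ, integral_Ioi_exp_mul_stdNormalCdf hc₀ hσ]
  have hc₀' : c₀ ≠ 0 := hc₀.ne
  simp only [explRho, explRho1, explRho2, explRho3, ← hσ_def, hσ2]
  field_simp
  ring_nf
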